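/- arXiv:1907.09416 — 4 statements merged into one kernel-verified Lean document; each statement's English description precedes it below -/
import Mathlib

section
/- Let P be a poset, C a cocomplete category, and F : P ⥤ C a functor. Let ι : P ⥤ Down(P) send p to the principal down-set D_p. Then the pointwise left Kan extension F̂ := Lan_ι F : Down(P) ⥤ C is a basic cosheaf: for every down-set S of P and every basic cover 𝒱 of S (a collection of down-sets whose union is S and such that for all V, W ∈ 𝒱 the intersection V ∩ W is a union of elements of 𝒱), the canonical map colim_{V ∈ 𝒱} F̂(V) → F̂(S) induced by the universal property of the colimit is an isomorphism. -/
/-!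
Functors on posets left Kan extend to cosheaves: the left Kan extension of
`F : P ⥤ C` along the embedding `ι : P ⥤ Down(P)`, `p ↦ D_p`, is a *basic cosheaf*:
for every down-set `S` and every basic cover `𝒱` of `S`, the canonical map
`colim_{V ∈ 𝒱} F̂(V) → F̂(S)` is an isomorphism.
-/

open CategoryTheory Limits

universe u v w

variable {P : Type v} [PartialOrder P]

/-- The functor `ι : P ⥤ Down(P)` sending `p` to its principal down-set `D_p`. -/
def principalDownFunctor (P : Type v) [PartialOrder P] : P ⥤ LowerSet P :=
  Monotone.functor (f := fun p => LowerSet.Iic p)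
    (fun _ _ h => LowerSet.coe_subset_coe.mp
      (fun _ hx => le_trans (LowerSet.mem_Iic_iff.mp hx) h))

/-- The inclusion `ι_𝒱 : 𝒱 ⥤ Down(P)` of a collection of down-sets,
viewed as a full subposet, into `Down(P)`. -/
def coverInclusion (𝒱 : Set (LowerSet P)) : ↥𝒱 ⥤ LowerSet P :=
  Monotone.functor (f := Subtype.val) (fun _ _ h => h)

variable {C : Type u} [Category.{w} C]

/-- Given a collection `𝒱` of down-sets all contained in `S`, the cocone on
`G ∘ ι_𝒱` with point `G(S)` whose legs are the maps `G(V) → G(S)`. -/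
def coverCocone (G : LowerSet P ⥤ C) {S : LowerSet P} {𝒱 : Set (LowerSet P)}
    (h : ∀ V ∈ 𝒱, V ≤ S) : Cocone (coverInclusion 𝒱 ⋙ G) where
  pt := G.obj S
  ι :=
    { app := fun V => G.map (homOfLE (h V V.2))
      naturality := fun V W f => by
        dsimp
        rw [Category.comp_id, ← G.map_comp]
        congr 1 }

/-- Every member of a cover of `S` is contained in `S`. -/
lemma coverLE {𝒱 : Set (LowerSet P)} {S : LowerSet P}
    (hcover : (⋃ V ∈ 𝒱, (V : Set P)) = (S : Set P)) : ∀ V ∈ 𝒱, V ≤ S := by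
  intro V hV
  rw [← LowerSet.coe_subset_coe, ← hcover]
  exact Set.subset_biUnion_of_mem hV

/-- The costructured arrow attached to `p ∈ U`. -/
def elArrow (U : LowerSet P) (p : P) (hp : p ∈ U) :
    CostructuredArrow (principalDownFunctor P) U :=
  CostructuredArrow.mk (S := principalDownFunctor P) (Y := p) (T := U)
    (homOfLE (show (principalDownFunctor P).obj p ≤ U from LowerSet.Iic_le.mpr hp))

lemma elArrow_left_mem (U : LowerSet P) (j : CostructuredArrow (principalDownFunctor P) U) :
    j.left ∈ U :=
  (LowerSet.Iic_le (a := j.left) (s := U)).mp (leOfHom j.hom)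

lemma elArrow_eq (U : LowerSet P) (j : CostructuredArrow (principalDownFunctor P) U) :
    j = elArrow U j.left (elArrow_left_mem U j) := by
  have h : j.hom = (elArrow U j.left (elArrow_left_mem U j)).hom := Subsingleton.elim _ _
  conv_lhs => rw [CostructuredArrow.eq_mk j, h]
  exact (CostructuredArrow.eq_mk _).symm

lemma costructured_ext (U : LowerSet P) (j k : CostructuredArrow (principalDownFunctor P) U)
    (h : j.left = k.left) : j = k := by
  rw [elArrow_eq U j, elArrow_eq U k]
  congr 1

lemma ι_map (F : P ⥤ C) [HasColimitsOfSize.{v, v} C] {U U' : LowerSet P} (h : U ≤ U')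
    (p : P) (hp : p ∈ U) (hp' : p ∈ U') :
    colimit.ι (CostructuredArrow.proj (principalDownFunctor P) U ⋙ F) (elArrow U p hp) ≫
      ((principalDownFunctor P).pointwiseLeftKanExtension F).map (homOfLE h) =
    colimit.ι (CostructuredArrow.proj (principalDownFunctor P) U' ⋙ F)
      (elArrow U' p hp') := by
  erw [Functor.pointwiseLeftKanExtension_map, colimit.ι_desc]
  dsimp only
  have e : (CostructuredArrow.map (homOfLE h)).obj (elArrow U p hp) = elArrow U' p hp' :=
    costructured_ext _ _ _ rfl
  congr 1

lemma ι_step (F : P ⥤ C) [HasColimitsOfSize.{v, v} C] (U : LowerSet P)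
    {p q : P} (hpq : p ≤ q) (hp : p ∈ U) (hq : q ∈ U) :
    F.map (homOfLE hpq) ≫
      colimit.ι (CostructuredArrow.proj (principalDownFunctor P) U ⋙ F) (elArrow U q hq) =
    colimit.ι (CostructuredArrow.proj (principalDownFunctor P) U ⋙ F) (elArrow U p hp) :=
  colimit.w (CostructuredArrow.proj (principalDownFunctor P) U ⋙ F)
    (CostructuredArrow.homMk (homOfLE hpq) (Subsingleton.elim _ _) :
      elArrow U p hp ⟶ elArrow U q hq)

lemma ι_cover_w (G : LowerSet P ⥤ C) (𝒱 : Set (LowerSet P)) {Z V : LowerSet P}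
    (hZ : Z ∈ 𝒱) (hV : V ∈ 𝒱) (h : Z ≤ V) [HasColimit (coverInclusion 𝒱 ⋙ G)] :
    G.map (homOfLE h) ≫ colimit.ι (coverInclusion 𝒱 ⋙ G) ⟨V, hV⟩ =
      colimit.ι (coverInclusion 𝒱 ⋙ G) ⟨Z, hZ⟩ := by
  have h1 := colimit.w (coverInclusion 𝒱 ⋙ G)
    (homOfLE (show (⟨Z, hZ⟩ : ↥𝒱) ≤ ⟨V, hV⟩ from h))
  rwa [Functor.comp_map,
    Subsingleton.elim ((coverInclusion 𝒱).map _)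
      (homOfLE (show (coverInclusion 𝒱).obj ⟨Z, hZ⟩ ≤ (coverInclusion 𝒱).obj ⟨V, hV⟩ from h))]
    at h1

/-- **Left Kan extensions of functors on posets are basic cosheaves.**
Let `F : P ⥤ C` with `C` cocomplete, and let `F̂ := Lan_ι F` be the pointwise left
Kan extension of `F` along `ι : P ⥤ Down(P)`, `p ↦ D_p`.  For every down-set `S`
and every basic cover `𝒱` of `S` (a collection of down-sets whose union is `S`,
such that the intersection of any two members is a union of members), the
canonical map `colim_{V ∈ 𝒱} F̂(V) → F̂(S)` is an isomorphism. -/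
theorem lan_isBasicCosheaf [HasColimitsOfSize.{v, v} C] (F : P ⥤ C)
    (S : LowerSet P) (𝒱 : Set (LowerSet P))
    (hcover : (⋃ V ∈ 𝒱, (V : Set P)) = (S : Set P))
    (hbasic : ∀ V ∈ 𝒱, ∀ W ∈ 𝒱,
      ∃ 𝒲 ⊆ 𝒱, (V : Set P) ∩ (W : Set P) = ⋃ Z ∈ 𝒲, (Z : Set P)) :
    IsIso (colimit.desc
      (coverInclusion 𝒱 ⋙ (principalDownFunctor P).pointwiseLeftKanExtension F)
      (coverCocone ((principalDownFunctor P).pointwiseLeftKanExtension F)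
        (coverLE hcover))) := by
  have hmem : ∀ p, p ∈ S → ∃ V, V ∈ 𝒱 ∧ p ∈ V := by
    intro p hp
    have h1 : p ∈ ⋃ V ∈ 𝒱, (V : Set P) := by rw [hcover]; exact hp
    simpa using h1
  -- independence of the choice of a cover member containing `p`
  have key : ∀ (V : LowerSet P) (hV : V ∈ 𝒱) (W : LowerSet P) (hW : W ∈ 𝒱)
      (p : P) (hpV : p ∈ V) (hpW : p ∈ W),
      colimit.ι (CostructuredArrow.proj (principalDownFunctor P) V ⋙ F) (elArrow V p hpV) ≫
        colimit.ι (coverInclusion 𝒱 ⋙ (principalDownFunctor P).pointwiseLeftKanExtension F)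
          ⟨V, hV⟩ =
      colimit.ι (CostructuredArrow.proj (principalDownFunctor P) W ⋙ F) (elArrow W p hpW) ≫
        colimit.ι (coverInclusion 𝒱 ⋙ (principalDownFunctor P).pointwiseLeftKanExtension F)
          ⟨W, hW⟩ := by
    intro V hV W hW p hpV hpW
    obtain ⟨𝒲, h𝒲, hint⟩ := hbasic V hV W hW
    have hpint : p ∈ ⋃ Z ∈ 𝒲, (Z : Set P) := by rw [← hint]; exact ⟨hpV, hpW⟩
    obtain ⟨Z, hZ𝒲, hpZ⟩ : ∃ Z, Z ∈ 𝒲 ∧ p ∈ Z := by simpa using hpint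
    have hsub : (Z : Set P) ⊆ (V : Set P) ∩ (W : Set P) := by
      rw [hint]; exact Set.subset_biUnion_of_mem hZ𝒲
    have hZV : Z ≤ V := fun x hx => (hsub hx).1
    have hZW : Z ≤ W := fun x hx => (hsub hx).2
    erw [← ι_map F hZV p hpZ hpV, Category.assoc, ι_cover_w _ 𝒱 (h𝒲 hZ𝒲) hV hZV,
      ← ι_map F hZW p hpZ hpW, Category.assoc, ι_cover_w _ 𝒱 (h𝒲 hZ𝒲) hW hZW]
    rfl
  -- the inverse map
  let c : Cocone (CostructuredArrow.proj (principalDownFunctor P) S ⋙ F) :=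
    { pt := colimit (coverInclusion 𝒱 ⋙ (principalDownFunctor P).pointwiseLeftKanExtension F)
      ι :=
        { app := fun j =>
            colimit.ι (CostructuredArrow.proj (principalDownFunctor P)
                (hmem j.left (elArrow_left_mem S j)).choose ⋙ F)
              (elArrow _ j.left (hmem j.left (elArrow_left_mem S j)).choose_spec.2) ≫
            colimit.ι (coverInclusion 𝒱 ⋙
                (principalDownFunctor P).pointwiseLeftKanExtension F)
              ⟨(hmem j.left (elArrow_left_mem S j)).choose,
                (hmem j.left (elArrow_left_mem S j)).choose_spec.1⟩
          naturality := fun j j' φ => by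
            dsimp only [Functor.comp_obj, Functor.comp_map, Functor.const_obj_obj,
              Functor.const_obj_map, CostructuredArrow.proj_obj, CostructuredArrow.proj_map]
            rw [Category.comp_id]
            have hpq : j.left ≤ j'.left := leOfHom φ.left
            have hq := elArrow_left_mem S j'
            have hWmem := (hmem j'.left hq).choose_spec.1
            have hqW := (hmem j'.left hq).choose_spec.2
            have hpW : j.left ∈ (hmem j'.left hq).choose :=
              (hmem j'.left hq).choose.lower hpq hqW
            have h1 := ι_step F (hmem j'.left hq).choose hpq hpW hqW
            erw [Subsingleton.elim ((CostructuredArrow.proj (principalDownFunctor P) S).map φ) (homOfLE hpq), ← Category.assoc, h1]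
            exact key _ hWmem _ (hmem j.left (elArrow_left_mem S j)).choose_spec.1
              j.left hpW (hmem j.left (elArrow_left_mem S j)).choose_spec.2 } }
  have hstep : ∀ (V : LowerSet P) (hV : V ∈ 𝒱),
      ((principalDownFunctor P).pointwiseLeftKanExtension F).map
          (homOfLE (coverLE hcover V hV)) ≫ colimit.desc _ c =
        colimit.ι (coverInclusion 𝒱 ⋙ (principalDownFunctor P).pointwiseLeftKanExtension F)
          ⟨V, hV⟩ := by
    intro V hV
    apply colimit.hom_ext
    intro j
    erw [elArrow_eq V j, ← Category.assoc,
      ι_map F (coverLE hcover V hV) j.left (elArrow_left_mem V j)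
        ((coverLE hcover V hV) (elArrow_left_mem V j)),
      colimit.ι_desc]
    dsimp only [c]
    have hpS := elArrow_left_mem S
      (elArrow S j.left ((coverLE hcover V hV) (elArrow_left_mem V j)))
    exact key _ (hmem j.left hpS).choose_spec.1 V hV j.left
      (hmem j.left hpS).choose_spec.2 (elArrow_left_mem V j)
  refine ⟨colimit.desc _ c, ?_, ?_⟩
  · -- f ≫ g = 𝟙
    apply colimit.hom_ext
    rintro ⟨V, hV⟩
    erw [← Category.assoc, colimit.ι_desc, Category.comp_id]
    exact hstep V hV
  · -- g ≫ f = 𝟙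
    show _ = 𝟙 (colimit (CostructuredArrow.proj (principalDownFunctor P) S ⋙ F))
    apply colimit.hom_ext (F := CostructuredArrow.proj (principalDownFunctor P) S ⋙ F)
    intro j
    erw [← Category.assoc, colimit.ι_desc, Category.comp_id]
    dsimp only [c]
    erw [Category.assoc, colimit.ι_desc]
    dsimp only [coverCocone]
    rw [elArrow_eq S j]
    have hpS := elArrow_left_mem S j
    exact ι_map F (coverLE hcover _ (hmem j.left hpS).choose_spec.1) j.left
      (hmem j.left hpS).choose_spec.2 hpS
end

section
/- Let P be a poset, S a down-set of P, and 𝒱 a cover of S by down-sets. Let 𝒥 be the category with objects the pairs (V, p) with V ∈ 𝒱 and p ∈ V, and a unique morphism (V,p) → (W,q) iff V ⊆ W and p ≤ q, and let π₁ : 𝒥 → 𝒱 be the projection (V,p) ↦ V. For every V ∈ 𝒱, the functor j_V : P_V → (π₁ ↓ V) sending q ∈ V to the object (V, q) with the identity morphism π₁(V,q) = V → V is a final (cofinal) functor: for every object x of (π₁ ↓ V), the comma category (x ↓ j_V) is nonempty and connected. -/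
/-!
An object `x` of `(π₁ ↓ V)` is a pair `(W, p)` with `W ⊆ V`, so `p ∈ V`, and `p` gives an object
of `(x ↓ j_V)` with a morphism to every other object `(q, (W, p) → (V, q))`, because such a
morphism forces `p ≤ q`; such a weakly initial object makes the category connected.
-/

open CategoryTheory

universe v

variable {P : Type v} [PartialOrder P]

/-- The indexing category `𝒥`: pairs `(V, p)` with `V ∈ 𝒱` and `p ∈ V`, with a
unique morphism `(V, p) → (W, q)` iff `V ⊆ W` and `p ≤ q`. -/
def CoverPairs (𝒱 : Set (LowerSet P)) : Type v :=
  {x : ↥𝒱 × P // x.2 ∈ (x.1 : LowerSet P)}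

instance (𝒱 : Set (LowerSet P)) : PartialOrder (CoverPairs 𝒱) :=
  inferInstanceAs (PartialOrder {x : ↥𝒱 × P // x.2 ∈ (x.1 : LowerSet P)})

/-- The projection `π₁ : 𝒥 ⥤ 𝒱`, `(V, p) ↦ V`, where `𝒱` is ordered by
inclusion. -/
def pi1 (𝒱 : Set (LowerSet P)) : CoverPairs 𝒱 ⥤ ↥𝒱 :=
  Monotone.functor (f := fun x => x.1.1) (fun _ _ h => h.1)

/-- The functor `j_V : P_V ⥤ (π₁ ↓ V)` sending `q ∈ V` to the object `(V, q)`
equipped with the identity morphism `π₁(V, q) = V → V`. -/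
def jFunctor (𝒱 : Set (LowerSet P)) (V : LowerSet P) (hV : V ∈ 𝒱) :
    ↥V ⥤ CostructuredArrow (pi1 𝒱) ⟨V, hV⟩ where
  obj q := CostructuredArrow.mk
    (Y := (⟨(⟨V, hV⟩, q.1), q.2⟩ : CoverPairs 𝒱)) (𝟙 (⟨V, hV⟩ : ↥𝒱))
  map {q r} f := CostructuredArrow.homMk
    (homOfLE (show ((⟨(⟨V, hV⟩, q.1), q.2⟩ : CoverPairs 𝒱) ≤ ⟨(⟨V, hV⟩, r.1), r.2⟩)
      from ⟨le_refl _, leOfHom f⟩))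
    (Subsingleton.elim _ _)

namespace CategoryTheory

lemma isConnected_of_nonempty_hom_from {C : Type*} [Category* C] (x : C)
    (h : ∀ y : C, Nonempty (x ⟶ y)) : IsConnected C :=
  have : Nonempty C := ⟨x⟩
  zigzag_isConnected fun y z =>
    (Zigzag.of_inv (h y).some).trans (Zigzag.of_hom (h z).some)

end CategoryTheory

section jFunctor

variable {𝒱 : Set (LowerSet P)} {V : LowerSet P} {hV : V ∈ 𝒱}

lemma snd_mem_of_costructuredArrow_pi1 (x : CostructuredArrow (pi1 𝒱) ⟨V, hV⟩) : x.left.1.2 ∈ V :=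
  leOfHom x.hom x.left.2

def jFunctorBase (x : CostructuredArrow (pi1 𝒱) ⟨V, hV⟩) :
    StructuredArrow x (jFunctor 𝒱 V hV) :=
  StructuredArrow.mk (Y := (⟨x.left.1.2, snd_mem_of_costructuredArrow_pi1 x⟩ : ↥V))
    (CostructuredArrow.homMk (homOfLE ⟨leOfHom x.hom, le_rfl⟩) (Subsingleton.elim _ _))

lemma nonempty_jFunctorBase_hom (x : CostructuredArrow (pi1 𝒱) ⟨V, hV⟩)
    (y : StructuredArrow x (jFunctor 𝒱 V hV)) : Nonempty (jFunctorBase x ⟶ y) :=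
  ⟨StructuredArrow.homMk (homOfLE (leOfHom y.hom.left).2)
    (CostructuredArrow.hom_ext _ _ (Subsingleton.elim _ _))⟩

end jFunctor

theorem jFunctor_final_general (𝒱 : Set (LowerSet P))
    (V : LowerSet P) (hV : V ∈ 𝒱) :
    (jFunctor 𝒱 V hV).Final :=
  ⟨fun x => isConnected_of_nonempty_hom_from _ (nonempty_jFunctorBase_hom x)⟩

/-- **`j_V` is final.**  Let `S` be a down-set of a poset `P` and let `𝒱` be a
cover of `S` by down-sets.  For every `V ∈ 𝒱`, the functor
`j_V : P_V ⥤ (π₁ ↓ V)` is final (cofinal): for every object `x` of `(π₁ ↓ V)`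
the comma category `(x ↓ j_V)` is nonempty and connected. -/
theorem jFunctor_final (S : LowerSet P) (𝒱 : Set (LowerSet P))
    (hcover : (⋃ V ∈ 𝒱, (V : Set P)) = (S : Set P))
    (V : LowerSet P) (hV : V ∈ 𝒱) :
    (jFunctor 𝒱 V hV).Final :=
  jFunctor_final_general 𝒱 V hV
end

section
/- Let P be a poset, C a cocomplete category, F : P ⥤ C a functor, S a down-set of P, and 𝒱 a basic cover of S by down-sets (the union of 𝒱 is S, and for all V, W ∈ 𝒱 the intersection V ∩ W is a union of elements of 𝒱). Let 𝒥 be the category with objects the pairs (V, p) with V ∈ 𝒱 and p ∈ V, and a unique morphism (V,p) → (W,q) iff V ⊆ W and p ≤ q, and let π₂ : 𝒥 → P_S be the projection (V,p) ↦ p, where P_S is the full subposet of P on the elements of S. Then for every p ∈ S there is an isomorphism, natural in p, Lan_{π₂}(F ∘ π₂)(p) ≅ F(p); that is, the colimit of F ∘ π₂ restricted to the comma category (π₂ ↓ p) is F(p). -/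
/-!
For a *basic* cover `𝒱` of a down-set `S` by down-sets and the category `𝒥` of
pairs `(V, p)` (`V ∈ 𝒱`, `p ∈ V`) with projection `π₂ : 𝒥 ⥤ P_S`, the pointwise
left Kan extension `Lan_{π₂}(F ∘ π₂)` is naturally isomorphic to `F` restricted
to `P_S`; i.e. the colimit of `F ∘ π₂` over the comma category `(π₂ ↓ p)` is
`F(p)`, naturally in `p ∈ P_S`.
-/

open CategoryTheory Limits

universe u v w

variable {P : Type v} [PartialOrder P]

/-- The inclusion of the full subposet `P_S` on the elements of a down-set `S`
into `P`. -/
def subposetInclusion (S : LowerSet P) : ↥S ⥤ P :=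
  Monotone.functor (f := Subtype.val) (fun _ _ h => h)

/-- The projection `π₂ : 𝒥 ⥤ P_S`, `(V, p) ↦ p`, for a cover `𝒱` of `S`. -/
def pi2S (𝒱 : Set (LowerSet P)) (S : LowerSet P) (h : ∀ V ∈ 𝒱, V ≤ S) :
    CoverPairs 𝒱 ⥤ ↥S :=
  Monotone.functor (f := fun x => ⟨x.1.2, h x.1.1.1 x.1.1.2 x.2⟩)
    (fun _ _ hle => hle.2)

variable {C : Type u} [Category.{w} C]

/-- **`Lan_{π₂}(F ∘ π₂)(p) ≅ F(p)`, naturally in `p ∈ P_S`.**  Let `S` be a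
down-set of `P` and `𝒱` a *basic* cover of `S` by down-sets (its union is `S`
and the intersection of any two members is a union of members).  Let `𝒥` be the
category of pairs `(V, p)` with `V ∈ 𝒱`, `p ∈ V`, and `π₂ : 𝒥 ⥤ P_S` the second
projection.  Then for `F : P ⥤ C` with `C` cocomplete, the pointwise left Kan
extension of `F ∘ π₂` along `π₂` is naturally isomorphic to the restriction of
`F` to `P_S`. -/
theorem lanPi2_iso_restriction [HasColimitsOfSize.{v, v} C] (F : P ⥤ C)
    (S : LowerSet P) (𝒱 : Set (LowerSet P))
    (hcover : (⋃ V ∈ 𝒱, (V : Set P)) = (S : Set P))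
    (hbasic : ∀ V ∈ 𝒱, ∀ W ∈ 𝒱,
      ∃ 𝒲 ⊆ 𝒱, (V : Set P) ∩ (W : Set P) = ⋃ Z ∈ 𝒲, (Z : Set P)) :
    Nonempty ((pi2S 𝒱 S (coverLE hcover)).pointwiseLeftKanExtension
        (pi2S 𝒱 S (coverLE hcover) ⋙ (subposetInclusion S ⋙ F)) ≅
      subposetInclusion S ⋙ F) := by
  classical
  set L := pi2S 𝒱 S (coverLE hcover) with hLdef
  set G := subposetInclusion S ⋙ F with hGdef
  have key : (Functor.LeftExtension.mk G (𝟙 (L ⋙ G))).IsPointwiseLeftKanExtension := by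
    intro p
    -- choose V ∈ 𝒱 containing p
    have hpS : (p : P) ∈ ⋃ V ∈ 𝒱, (V : Set P) := by rw [hcover]; exact p.2
    have hex := Set.mem_iUnion₂.1 hpS
    let V : LowerSet P := hex.choose
    have hV : V ∈ 𝒱 := hex.choose_spec.choose
    have hpV : (p : P) ∈ (V : Set P) := hex.choose_spec.choose_spec
    -- the distinguished object over p
    let j₀ : CoverPairs 𝒱 := ⟨(⟨V, hV⟩, (p : P)), hpV⟩
    have hj₀ : L.obj j₀ ≤ p := le_refl _
    let g₀ : CostructuredArrow L p := CostructuredArrow.mk (homOfLE hj₀)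
    refine IsColimit.mk (fun c => c.ι.app g₀) ?_ ?_
    · intro c g
      -- g.left = ((V', _), q, _) with q ≤ p
      set j := g.left with hj
      have hqp : (L.obj j : P) ≤ (p : P) := leOfHom g.hom
      -- q ∈ V' ∩ V
      have hq : (j.1.2 : P) ∈ (j.1.1 : LowerSet P) := j.2
      have hqV : (j.1.2 : P) ∈ (V : LowerSet P) := V.lower hqp hpV
      obtain ⟨𝒲, h𝒲, hVW⟩ := hbasic _ j.1.1.2 V hV
      have hmem : (j.1.2 : P) ∈ ⋃ Z ∈ 𝒲, (Z : Set P) := by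
        rw [← hVW]; exact ⟨hq, hqV⟩
      obtain ⟨Z, hZ𝒲, hqZ⟩ := Set.mem_iUnion₂.1 hmem
      have hZV' : (Z : Set P) ⊆ (j.1.1 : LowerSet P) := fun x hx => by
        have : x ∈ (⋃ Z ∈ 𝒲, (Z : Set P)) := Set.mem_biUnion hZ𝒲 hx
        rw [← hVW] at this; exact this.1
      have hZV : (Z : Set P) ⊆ (V : LowerSet P) := fun x hx => by
        have : x ∈ (⋃ Z ∈ 𝒲, (Z : Set P)) := Set.mem_biUnion hZ𝒲 hx
        rw [← hVW] at this; exact this.2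
      -- object (Z, q) over p
      let a : CoverPairs 𝒱 := ⟨(⟨Z, h𝒲 hZ𝒲⟩, j.1.2), hqZ⟩
      have haj : a ≤ j := ⟨fun _ h => hZV' h, le_refl _⟩
      have haj₀ : a ≤ j₀ := ⟨fun _ h => hZV h, hqp⟩
      have haL : L.obj a ≤ p := hqp
      let A : CostructuredArrow L p := CostructuredArrow.mk (homOfLE haL)
      have f₁ : A ⟶ g := CostructuredArrow.homMk (homOfLE haj) (Subsingleton.elim _ _)
      have f₂ : A ⟶ g₀ := CostructuredArrow.homMk (homOfLE haj₀) (Subsingleton.elim _ _)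
      have w₁ := c.w f₁
      have w₂ := c.w f₂
      dsimp [Functor.LeftExtension.coconeAt, Functor.LeftExtension.mk] at w₁ w₂ ⊢
      erw [Category.id_comp]
      have w₁' : G.map (𝟙 (L.obj g.left)) ≫ c.ι.app g = c.ι.app A := w₁
      have w₂' : G.map g.hom ≫ c.ι.app g₀ = c.ι.app A := w₂
      erw [w₂', ← w₁', G.map_id, Category.id_comp]
    · intro c m hm
      have h0 := hm g₀
      dsimp [Functor.LeftExtension.coconeAt, Functor.LeftExtension.mk] at h0
      erw [Category.id_comp] at h0
      have h0' : G.map (𝟙 p) ≫ m = c.ι.app g₀ := h0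
      erw [G.map_id, Category.id_comp] at h0'
      exact h0'
  have : G.IsLeftKanExtension (𝟙 (L ⋙ G)) := key.isLeftKanExtension
  exact ⟨Functor.leftKanExtensionUnique _ (Functor.pointwiseLeftKanExtensionUnit L (L ⋙ G)) G
    (𝟙 (L ⋙ G))⟩
end

section
/- Let P be a poset, C a complete category, and F : P ⥤ C a functor. Topologize P by declaring up-sets to be open, so Open(P) = Up(P), and let ι : P ⥤ Up(P)^op send p to the principal up-set U_p = {q ∈ P : p ≤ q}. Then the pointwise right Kan extension Ran_ι F : Up(P)^op ⥤ C is a sheaf: for every up-set S and every basic cover 𝒰 of S by up-sets (the union of 𝒰 is S, and for all U_i, U_j ∈ 𝒰 the intersection U_i ∩ U_j is a union of elements of 𝒰), the canonical map Ran_ι F(S) → lim_{U ∈ 𝒰} Ran_ι F(U) is an isomorphism. -/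
/-!
Functors on posets right Kan extend to sheaves: for `F : P ⥤ C` with `C`
complete, the pointwise right Kan extension of `F` along `ι : P ⥤ Up(P)ᵒᵖ`,
`p ↦ U_p`, is a sheaf for all basic covers by up-sets.

Here we use that Mathlib's `UpperSet P` is ordered by *reverse* inclusion, so
that as a category it is exactly `Up(P)ᵒᵖ`, the opposite of the poset of
up-sets (open sets of the Alexandrov topology) ordered by inclusion.  A
morphism `S ⟶ U` in `UpperSet P` therefore corresponds to an inclusion
`U ⊆ S` of up-sets, and the full subposet `↥𝒰 ⊆ UpperSet P` on a collection of
up-sets is the category `𝒰ᵒᵖ`.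
-/

open CategoryTheory Limits

universe u v w

variable {P : Type v} [PartialOrder P]

/-- The functor `ι : P ⥤ Up(P)ᵒᵖ` sending `p` to its principal up-set `U_p`. -/
def principalUpFunctor (P : Type v) [PartialOrder P] : P ⥤ UpperSet P :=
  Monotone.functor (f := fun p => UpperSet.Ici p)
    (fun _ _ h => UpperSet.coe_subset_coe.mp
      (fun _ hx => le_trans h (UpperSet.mem_Ici_iff.mp hx)))

/-- The inclusion `ι_𝒰ᵒᵖ : 𝒰ᵒᵖ ⥤ Up(P)ᵒᵖ` of a collection of up-sets, viewed as
a full subposet of `UpperSet P` (i.e. ordered by reverse inclusion). -/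
def coverInclusionOp (𝒰 : Set (UpperSet P)) : ↥𝒰 ⥤ UpperSet P :=
  Monotone.functor (f := Subtype.val) (fun _ _ h => h)

variable {C : Type u} [Category.{w} C]

/-- Every member of a cover of `S` is contained in `S`; in `Up(P)ᵒᵖ` this is a
morphism `S ⟶ U`. -/
lemma coverGE {𝒰 : Set (UpperSet P)} {S : UpperSet P}
    (hcover : (⋃ U ∈ 𝒰, (U : Set P)) = (S : Set P)) : ∀ U ∈ 𝒰, S ≤ U := by
  intro U hU
  rw [← UpperSet.coe_subset_coe, ← hcover]
  exact Set.subset_biUnion_of_mem hU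

/-- Given a collection `𝒰` of up-sets all contained in `S`, the cone on
`G ∘ ι_𝒰ᵒᵖ` with point `G(S)` whose legs are the maps `G(S) → G(U)`. -/
def coverCone (G : UpperSet P ⥤ C) {S : UpperSet P} {𝒰 : Set (UpperSet P)}
    (h : ∀ U ∈ 𝒰, S ≤ U) : Cone (coverInclusionOp 𝒰 ⋙ G) where
  pt := G.obj S
  π :=
    { app := fun U => G.map (homOfLE (h U U.2))
      naturality := fun U V f => by
        dsimp
        rw [Category.id_comp, ← G.map_comp]
        congr 1 }


section Aux

variable [HasLimitsOfSize.{v, v} C] (F : P ⥤ C)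

/-- The structured arrow `U ⟶ ι p` witnessing `p ∈ U`. -/
abbrev arrObj (U : UpperSet P) {p : P} (hp : p ∈ U) :
    StructuredArrow U (principalUpFunctor P) :=
  StructuredArrow.mk (homOfLE (UpperSet.le_Ici.mpr hp))

lemma arrObj_eq (U : UpperSet P) (j : StructuredArrow U (principalUpFunctor P)) :
    j = arrObj U (UpperSet.le_Ici.mp (leOfHom j.hom)) := by
  rw [StructuredArrow.eq_mk j]
  congr 1

lemma map_π {U V : UpperSet P} (f : U ⟶ V) {p : P} (hp : p ∈ V) (hp' : p ∈ U) :
    ((principalUpFunctor P).pointwiseRightKanExtension F).map f ≫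
      limit.π (StructuredArrow.proj V (principalUpFunctor P) ⋙ F) (arrObj V hp) =
    limit.π (StructuredArrow.proj U (principalUpFunctor P) ⋙ F) (arrObj U hp') := by
  rw [Functor.pointwiseRightKanExtension_map]
  refine (limit.lift_π _ _).trans ?_
  dsimp
  have h : f ≫ homOfLE (UpperSet.le_Ici.mpr hp) = homOfLE (UpperSet.le_Ici.mpr hp') :=
    Subsingleton.elim _ _
  congr 1

lemma π_map (U : UpperSet P) {p q : P} (hp : p ∈ U) (hq : q ∈ U) (hpq : p ≤ q) :
    limit.π (StructuredArrow.proj U (principalUpFunctor P) ⋙ F) (arrObj U hp) ≫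
      F.map (homOfLE hpq) =
    limit.π (StructuredArrow.proj U (principalUpFunctor P) ⋙ F) (arrObj U hq) :=
  limit.w (StructuredArrow.proj U (principalUpFunctor P) ⋙ F)
    (show arrObj U hp ⟶ arrObj U hq from
      StructuredArrow.homMk (homOfLE hpq) (Subsingleton.elim _ _))

variable {F}

/-- Well-definedness: for a cone `s` over the restricted diagram, the composite
`s.pt ⟶ G U ⟶ F p` does not depend on the choice of `U ∈ 𝒰` containing `p`. -/
lemma cone_w {𝒰 : Set (UpperSet P)}
    (hbasic : ∀ U ∈ 𝒰, ∀ V ∈ 𝒰,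
      ∃ 𝒲 ⊆ 𝒰, (U : Set P) ∩ (V : Set P) = ⋃ W ∈ 𝒲, (W : Set P))
    (s : Cone (coverInclusionOp 𝒰 ⋙ (principalUpFunctor P).pointwiseRightKanExtension F))
    {U V : UpperSet P} (hU : U ∈ 𝒰) (hV : V ∈ 𝒰) {p : P} (hpU : p ∈ U) (hpV : p ∈ V) :
    s.π.app ⟨U, hU⟩ ≫
        limit.π (StructuredArrow.proj U (principalUpFunctor P) ⋙ F) (arrObj U hpU) =
      s.π.app ⟨V, hV⟩ ≫
        limit.π (StructuredArrow.proj V (principalUpFunctor P) ⋙ F) (arrObj V hpV) := by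
  obtain ⟨𝒲, h𝒲, hUV⟩ := hbasic U hU V hV
  have hpW : p ∈ ⋃ W ∈ 𝒲, (W : Set P) := hUV ▸ ⟨hpU, hpV⟩
  obtain ⟨W, hW, hpW⟩ := Set.mem_iUnion₂.mp hpW
  have hWsub : (W : Set P) ⊆ (U : Set P) ∩ (V : Set P) := hUV ▸ Set.subset_biUnion_of_mem hW
  have hUW : U ≤ W := UpperSet.coe_subset_coe.mp (fun x hx => (hWsub hx).1)
  have hVW : V ≤ W := UpperSet.coe_subset_coe.mp (fun x hx => (hWsub hx).2)
  have key : ∀ (X : UpperSet P) (hX : X ∈ 𝒰) (hXW : X ≤ W) (hpX : p ∈ X),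
      s.π.app ⟨X, hX⟩ ≫
          limit.π (StructuredArrow.proj X (principalUpFunctor P) ⋙ F) (arrObj X hpX) =
        s.π.app ⟨W, h𝒲 hW⟩ ≫
          limit.π (StructuredArrow.proj W (principalUpFunctor P) ⋙ F) (arrObj W hpW) := by
    intro X hX hXW hpX
    rw [← map_π F (homOfLE hXW) hpW hpX]
    refine (Category.assoc _ _ _).symm.trans ?_
    congr 1
    exact s.w (homOfLE (Subtype.mk_le_mk.mpr hXW))
  rw [key U hU hUW hpU, key V hV hVW hpV]

end Aux

/-- **Right Kan extensions of functors on posets are sheaves.**  Let `P` be a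
poset topologized by up-sets, `C` a complete category and `F : P ⥤ C`.  Let
`Ran_ι F` be the pointwise right Kan extension of `F` along
`ι : P ⥤ Up(P)ᵒᵖ`, `p ↦ U_p`.  For every up-set `S` and every basic cover `𝒰`
of `S` by up-sets (the union of `𝒰` is `S`, and the intersection of any two
members of `𝒰` is a union of members), the canonical map
`Ran_ι F (S) → lim_{U ∈ 𝒰} Ran_ι F (U)` is an isomorphism. -/
theorem ran_isSheaf [HasLimitsOfSize.{v, v} C] (F : P ⥤ C)
    (S : UpperSet P) (𝒰 : Set (UpperSet P))
    (hcover : (⋃ U ∈ 𝒰, (U : Set P)) = (S : Set P))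
    (hbasic : ∀ U ∈ 𝒰, ∀ V ∈ 𝒰,
      ∃ 𝒲 ⊆ 𝒰, (U : Set P) ∩ (V : Set P) = ⋃ W ∈ 𝒲, (W : Set P)) :
    IsIso (limit.lift
      (coverInclusionOp 𝒰 ⋙ (principalUpFunctor P).pointwiseRightKanExtension F)
      (coverCone ((principalUpFunctor P).pointwiseRightKanExtension F)
        (coverGE hcover))) := by
  classical
  have memS : ∀ (j : StructuredArrow S (principalUpFunctor P)), j.right ∈ S :=
    fun j => UpperSet.le_Ici.mp (leOfHom j.hom)
  have memU : ∀ p : P, p ∈ S → ∃ U ∈ 𝒰, p ∈ U := by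
    intro p hp
    have : p ∈ ⋃ U ∈ 𝒰, (U : Set P) := hcover.symm ▸ hp
    simpa using this
  choose u hu1 hu2 using memU
  have hc : IsLimit (coverCone
      ((principalUpFunctor P).pointwiseRightKanExtension F) (coverGE hcover)) := by
    refine
      { lift := fun s => limit.lift (StructuredArrow.proj S (principalUpFunctor P) ⋙ F)
          { pt := s.pt
            π :=
              { app := fun j =>
                  s.π.app ⟨u j.right (memS j), hu1 j.right (memS j)⟩ ≫
                    limit.π (StructuredArrow.proj (u j.right (memS j))
                      (principalUpFunctor P) ⋙ F)
                      (arrObj (u j.right (memS j)) (hu2 j.right (memS j)))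
                naturality := ?_ } }
        fac := ?_
        uniq := ?_ }
    · intro j j' φ
      have hpq : j.right ≤ j'.right := leOfHom φ.right
      have hq : j'.right ∈ u j.right (memS j) :=
        (u j.right (memS j)).upper' hpq (hu2 j.right (memS j))
      have hφ : φ.right = homOfLE hpq := Subsingleton.elim _ _
      dsimp
      have hφ' : (StructuredArrow.proj S (principalUpFunctor P)).map φ = homOfLE hpq :=
        Subsingleton.elim _ _
      rw [Category.id_comp]
      refine Eq.trans ?_ (Category.assoc _ _ _).symm
      rw [hφ']
      refine Eq.trans (cone_w hbasic s (hu1 _ _) (hu1 _ _) (hu2 _ _) hq) ?_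
      congr 1
      exact (π_map F _ _ hq hpq).symm
    · intro s U
      apply limit.hom_ext
      intro j
      have hpU : j.right ∈ (U : UpperSet P) := UpperSet.le_Ici.mp (leOfHom j.hom)
      have hpS : j.right ∈ S := coverGE hcover U U.2 hpU
      dsimp only [coverCone, coverInclusionOp, Monotone.functor, Functor.comp_obj,
        Functor.comp_map]
      rw [arrObj_eq U.1 j]
      erw [Category.assoc,
        map_π F (homOfLE (coverGE hcover U.1 U.2)) hpU hpS, limit.lift_π]
      dsimp
      exact cone_w hbasic s (hu1 _ _) U.2 (hu2 _ _) hpU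
    · intro s m hm
      refine limit.hom_ext (F := StructuredArrow.proj S (principalUpFunctor P) ⋙ F)
        fun j => ?_
      have hpS : j.right ∈ S := memS j
      rw [arrObj_eq S j, limit.lift_π]
      dsimp
      rw [← map_π F (homOfLE (coverGE hcover _ (hu1 j.right hpS)))
        (hu2 j.right hpS) hpS]
      refine (Category.assoc _ _ _).symm.trans ?_
      congr 1
      exact hm ⟨u j.right hpS, hu1 j.right hpS⟩
  refine ⟨hc.lift (limit.cone _), hc.hom_ext fun j => ?_, limit.hom_ext fun j => ?_⟩
  · rw [Category.assoc, hc.fac, Category.id_comp]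
    exact limit.lift_π _ _
  · rw [Category.assoc, limit.lift_π, Category.id_comp]
    exact hc.fac _ _
end
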